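/- Step (d) of the classification proof: let X be a type and let w be a polygon word over X in which every pair is discord and in which no two pairs are interleaved. Then w ∼ [] (w represents the sphere). -/

import Mathlib

namespace Surface

/-- A signed word over `X`: the entry `(a, true)` represents the edge `a`, and
`(a, false)` represents its inverse `ā`. -/
abbrev Word (X : Type*) := List (X × Bool)

/-- The inverse of a signed word: reverse it and negate every `Bool`. -/
def wordInv {X : Type*} (w : Word X) : Word X :=
  (w.map fun p => (p.1, !p.2)).reverse

/-- The letter `a` occurs in the signed word `w`. -/
def Occurs {X : Type*} (a : X) (w : Word X) : Prop :=
  ∃ s : Bool, (a, s) ∈ w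

/-- A polygon word: every letter that occurs, occurs exactly twice (counting `(a,true)`
and `(a,false)` together). -/
def IsPolygon {X : Type*} [DecidableEq X] (w : Word X) : Prop :=
  ∀ a : X, Occurs a w → (w.map Prod.fst).count a = 2

/-- The smallest equivalence relation on signed words closed under cyclicity, inversion,
cancellation, the discord rule and the concord rule. -/
inductive WEquiv {X : Type*} : Word X → Word X → Prop
  | refl (w : Word X) : WEquiv w w
  | symm {w v : Word X} : WEquiv w v → WEquiv v w
  | trans {w v u : Word X} : WEquiv w v → WEquiv v u → WEquiv w u
  /-- (1) cyclicity -/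
  | cyc (α : Word X) (x : X × Bool) : WEquiv (α ++ [x]) ([x] ++ α)
  /-- (2) inversion -/
  | inv (w : Word X) : WEquiv w (wordInv w)
  /-- (3) cancellation -/
  | cancel (α : Word X) (a : X) (s : Bool) (hα : ¬ Occurs a α) :
      WEquiv (α ++ [(a, s), (a, !s)]) α
  /-- (4) discord rule -/
  | discord (α β β' : Word X) (a : X) (s : Bool)
      (hα : ¬ Occurs a α) (hβ : ¬ Occurs a β) (hβ' : ¬ Occurs a β') :
      WEquiv (α ++ [(a, s)] ++ β ++ β' ++ [(a, !s)])
             (α ++ [(a, s)] ++ β' ++ β ++ [(a, !s)])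
  /-- (5) concord rule -/
  | concord (α β : Word X) (a : X) (s : Bool)
      (hα : ¬ Occurs a α) (hβ : ¬ Occurs a β) :
      WEquiv (α ++ [(a, s)] ++ β ++ [(a, s)])
             (α ++ wordInv β ++ [(a, s), (a, s)])

/-- The word `a₁a₁a₂a₂⋯aₖaₖ`, representing the connected sum of `k` projective planes. -/
def PWord {X : Type*} {k : ℕ} (a : Fin k → X) : Word X :=
  (List.ofFn fun i => [(a i, true), (a i, true)]).flatten

/-- The word `a₁b₁ā₁b̄₁⋯aₙbₙāₙb̄ₙ`, representing the connected sum of `n` tori. -/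
def TWord {X : Type*} {n : ℕ} (a b : Fin n → X) : Word X :=
  (List.ofFn fun i => [(a i, true), (b i, true), (a i, false), (b i, false)]).flatten

/-- `w` contains a concord pair: some letter occurs twice with the same sign. -/
def HasConcordPair {X : Type*} (w : Word X) : Prop :=
  ∃ (a : X) (s : Bool) (α β γ : Word X),
    w = α ++ [(a, s)] ++ β ++ [(a, s)] ++ γ

/-- `w` contains two interleaved pairs: letters `a ≠ b` occurring in the pattern
`⋯a⋯b⋯a⋯b⋯`. -/
def HasInterleaved {X : Type*} (w : Word X) : Prop :=
  ∃ (a b : X) (s s' t t' : Bool) (α β γ δ ε : Word X), a ≠ b ∧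
    w = α ++ [(a, s)] ++ β ++ [(b, t)] ++ γ ++ [(a, s')] ++ δ ++ [(b, t')] ++ ε

/-! In a polygon word without interleaved pairs, the letters strictly between the two
occurrences of the first letter form again such a word; descending into it finds a pair whose
occurrences are adjacent, and as a discord pair it is a subword `aā`. Rotating `aā` to the end
and cancelling it leaves a shorter word with the same three properties, so induction on the
length reaches the empty word. -/

open List

section

variable {X : Type*}

instance : Trans (@WEquiv X) (@WEquiv X) (@WEquiv X) := ⟨WEquiv.trans⟩

theorem occurs_iff_mem_map_fst {a : X} {w : Word X} : Occurs a w ↔ a ∈ w.map Prod.fst := by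
  simp [Occurs]

theorem occurs_append {a : X} {u v : Word X} : Occurs a (u ++ v) ↔ Occurs a u ∨ Occurs a v := by
  simp only [occurs_iff_mem_map_fst, map_append, mem_append]

namespace WEquiv

theorem append_comm : ∀ u v : Word X, WEquiv (u ++ v) (v ++ u)
  | [], v => by simpa using refl v
  | x :: u, v =>
    calc WEquiv ([x] ++ (u ++ v)) ((u ++ v) ++ [x]) := (cyc _ x).symm
      _ = u ++ (v ++ [x]) := by simp
      WEquiv _ ((v ++ [x]) ++ u) := append_comm u (v ++ [x])
      _ = v ++ x :: u := by simp

theorem cancel_adjacent {α γ : Word X} {a : X} (s : Bool) (ha : ¬ Occurs a (α ++ γ)) :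
    WEquiv (α ++ (a, s) :: (a, !s) :: γ) (α ++ γ) :=
  calc WEquiv (α ++ ([(a, s), (a, !s)] ++ γ)) ([(a, s), (a, !s)] ++ (γ ++ α)) := by
        simpa using append_comm α ([(a, s), (a, !s)] ++ γ)
    WEquiv _ ((γ ++ α) ++ [(a, s), (a, !s)]) := append_comm _ _
    WEquiv _ (γ ++ α) := cancel _ a s (by rwa [occurs_append, or_comm, ← occurs_append])
    WEquiv _ (α ++ γ) := append_comm γ α

end WEquiv

theorem cons_sublist_iff_exists_eq_append_cons {x : X × Bool} {l w : Word X} :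
    x :: l <+ w ↔ ∃ p q, w = p ++ x :: q ∧ l <+ q := by
  constructor
  · intro h
    obtain ⟨r₁, r₂, rfl, hx, hl⟩ := cons_sublist_iff.1 h
    obtain ⟨p, q, rfl⟩ := append_of_mem hx
    exact ⟨p, q ++ r₂, by simp, hl.trans (sublist_append_right q r₂)⟩
  · rintro ⟨p, q, rfl, h⟩
    exact (h.cons_cons x).trans (sublist_append_right p _)

theorem hasConcordPair_iff_sublist {w : Word X} :
    HasConcordPair w ↔ ∃ a s, [(a, s), (a, s)] <+ w := by
  constructor
  · rintro ⟨a, s, α, β, γ, rfl⟩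
    exact ⟨a, s, by simp⟩
  · rintro ⟨a, s, h⟩
    obtain ⟨α, q, rfl, hq⟩ := cons_sublist_iff_exists_eq_append_cons.1 h
    obtain ⟨β, γ, rfl, -⟩ := cons_sublist_iff_exists_eq_append_cons.1 hq
    exact ⟨a, s, α, β, γ, by simp⟩

theorem HasConcordPair.mono {v w : Word X} (h : v <+ w) (hv : HasConcordPair v) :
    HasConcordPair w :=
  let ⟨a, s, ha⟩ := hasConcordPair_iff_sublist.1 hv
  hasConcordPair_iff_sublist.2 ⟨a, s, ha.trans h⟩

theorem hasInterleaved_iff_sublist {w : Word X} :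
    HasInterleaved w ↔ ∃ (a b : X) (s s' t t' : Bool), a ≠ b ∧
      [(a, s), (b, t), (a, s'), (b, t')] <+ w := by
  simp only [cons_sublist_iff_exists_eq_append_cons]
  constructor
  · rintro ⟨a, b, s, s', t, t', α, β, γ, δ, ε, hab, rfl⟩
    exact ⟨a, b, s, s', t, t', hab, α, _, by simp, β, _, rfl, γ, _, rfl, δ, ε, rfl, nil_sublist _⟩
  · rintro ⟨a, b, s, s', t, t', hab, α, _, rfl, β, _, rfl, γ, _, rfl, δ, ε, rfl, -⟩
    exact ⟨a, b, s, s', t, t', α, β, γ, δ, ε, hab, by simp⟩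

theorem HasInterleaved.mono {v w : Word X} (h : v <+ w) (hv : HasInterleaved v) :
    HasInterleaved w :=
  let ⟨a, b, s, s', t, t', hab, hl⟩ := hasInterleaved_iff_sublist.1 hv
  hasInterleaved_iff_sublist.2 ⟨a, b, s, s', t, t', hab, hl.trans h⟩

namespace IsPolygon

variable [DecidableEq X]

theorem not_occurs_of_append_cons_append_cons {α β γ : Word X} {a : X} {s t : Bool}
    (hw : IsPolygon (α ++ (a, s) :: (β ++ (a, t) :: γ))) : ¬ Occurs a (α ++ β ++ γ) := by
  have h := hw a ⟨s, by simp⟩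
  simp only [occurs_iff_mem_map_fst, ← count_pos_iff, map_append, map_cons, count_append,
    count_cons_self] at h ⊢
  omega

theorem of_cons_append_cons {β γ : Word X} {a : X} {s t : Bool}
    (hw : IsPolygon ((a, s) :: (β ++ (a, t) :: γ)))
    (hint : ¬ HasInterleaved ((a, s) :: (β ++ (a, t) :: γ))) : IsPolygon β := by
  have ha : ¬ Occurs a ([] ++ β ++ γ) := hw.not_occurs_of_append_cons_append_cons (α := [])
  rintro c ⟨u, hu⟩
  have hca : c ≠ a := by
    rintro rfl
    exact ha ⟨u, by simp [hu]⟩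
  -- a second occurrence of `c` after the second `a` would interleave `a` and `c`
  have hcγ : ¬ Occurs c γ := fun ⟨u', hu'⟩ => hint <| hasInterleaved_iff_sublist.2
    ⟨a, c, s, t, u, u', hca.symm,
      ((singleton_sublist.2 hu).append ((singleton_sublist.2 hu').cons_cons _)).cons_cons _⟩
  have h := hw c ⟨u, by simp [hu]⟩
  rw [occurs_iff_mem_map_fst, ← count_eq_zero] at hcγ
  simpa [count_cons, hca, hca.symm, hcγ] using h

theorem of_append_cons_cons {α γ : Word X} {a : X} {s t : Bool}
    (hw : IsPolygon (α ++ (a, s) :: (a, t) :: γ)) : IsPolygon (α ++ γ) := by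
  have ha : ¬ Occurs a (α ++ [] ++ γ) := hw.not_occurs_of_append_cons_append_cons (β := [])
  intro c hc
  have hca : c ≠ a := by
    rintro rfl
    exact ha (by simpa using hc)
  have h := hw c (hc.imp fun u hu => by simp only [mem_append, mem_cons] at hu ⊢; tauto)
  simpa [count_cons, hca, hca.symm] using h

theorem exists_eq_append_cons_cons {w : Word X} (hw : IsPolygon w) (hint : ¬ HasInterleaved w)
    (hne : w ≠ []) : ∃ (α : Word X) (a : X) (s t : Bool) (γ : Word X),
      w = α ++ (a, s) :: (a, t) :: γ := by
  obtain ⟨⟨a, s⟩, rest, rfl⟩ := exists_cons_of_ne_nil hne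
  obtain ⟨t, ht⟩ : Occurs a rest := by
    have h := hw a ⟨s, mem_cons_self⟩
    rw [occurs_iff_mem_map_fst, ← count_pos_iff]
    simp only [map_cons, count_cons_self] at h
    omega
  obtain ⟨β, γ, rfl⟩ := append_of_mem ht
  rcases eq_or_ne β [] with rfl | hβ
  · exact ⟨[], a, s, t, γ, rfl⟩
  have hsub : β <+ (a, s) :: (β ++ (a, t) :: γ) :=
    (sublist_append_left β _).trans (sublist_cons_self _ _)
  obtain ⟨α, b, s', t', γ', rfl⟩ := (hw.of_cons_append_cons hint).exists_eq_append_cons_cons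
    (mt (HasInterleaved.mono hsub) hint) hβ
  exact ⟨(a, s) :: α, b, s', t', γ' ++ (a, t) :: γ, by simp⟩
termination_by w.length
decreasing_by all_goals simp_all

end IsPolygon

end

/-- Step (d) of the classification proof: a polygon word with only discord pairs and
no two interleaved pairs is equivalent to the empty word (the sphere). -/
theorem discord_noninterleaved_is_sphere {X : Type*} [DecidableEq X]
    (w : Word X) (hw : IsPolygon w)
    (hdis : ¬ HasConcordPair w) (hint : ¬ HasInterleaved w) :
    WEquiv w [] := by
  rcases eq_or_ne w [] with rfl | hne
  · exact .refl []
  obtain ⟨α, a, s, t, γ, rfl⟩ := hw.exists_eq_append_cons_cons hint hne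
  obtain rfl : t = !s := Bool.eq_not_iff.2 fun hts => hdis ⟨a, s, α, [], γ, by simp [hts]⟩
  have hsub : α ++ γ <+ α ++ (a, s) :: (a, !s) :: γ :=
    (Sublist.refl α).append ((sublist_cons_self _ _).trans (sublist_cons_self _ _))
  have ha : ¬ Occurs a (α ++ γ) := by
    simpa using hw.not_occurs_of_append_cons_append_cons (β := [])
  calc WEquiv _ (α ++ γ) := WEquiv.cancel_adjacent s ha
    WEquiv _ [] := discord_noninterleaved_is_sphere (α ++ γ) hw.of_append_cons_cons
      (mt (HasConcordPair.mono hsub) hdis) (mt (HasInterleaved.mono hsub) hint)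
termination_by w.length
decreasing_by all_goals simp_all

end Surface
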